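/- arXiv:1407.2662 — 6 statements merged into one kernel-verified Lean document; each statement's English description precedes it below -/
import Mathlib

section
/- Sauer's lemma: if C is a concept class over X with VC dimension at most d, and B ⊆ X is a finite set with |B| > d ≥ 1, then |Π_C(B)| ≤ (e·|B|/d)^d. -/
/-!
Identify `Π_C(B)` with a family of subsets of `B`. A subset of `B` shattered by that family is
shattered by `C`, so the family has VC dimension at most `d`, and the Sauer–Shelah lemma bounds
its size by `∑_{k ≤ d} (n choose k)`, `n = |B|`. With `x = d / n ≤ 1`,
`x ^ d ∑_{k ≤ d} (n choose k) ≤ ∑_{k ≤ d} (n choose k) x ^ k ≤ (1 + x) ^ n ≤ exp (x n) = e ^ d`.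
-/

/-- Projection of a concept class on a finite set `B`. -/
def proj {X : Type*} (C : Set (X → Bool)) (B : Finset X) : Set (B → Bool) :=
  {g | ∃ c ∈ C, ∀ x : B, c x = g x}

/-- `C` shatters the finite set `B` if it realizes every dichotomy on `B`. -/
def Shatters {X : Type*} (C : Set (X → Bool)) (B : Finset X) : Prop :=
  ∀ g : X → Bool, ∃ c ∈ C, ∀ x ∈ B, c x = g x

open Finset hiding Shatters

lemma sum_Iic_choose_mul_pow_le_one_add_pow (n d : ℕ) {x : ℝ} (hx : 0 ≤ x) :
    ∑ k ∈ Iic d, (n.choose k : ℝ) * x ^ k ≤ (1 + x) ^ n := by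
  calc ∑ k ∈ Iic d, (n.choose k : ℝ) * x ^ k
      ≤ ∑ k ∈ Iic d ∪ range (n + 1), (n.choose k : ℝ) * x ^ k :=
        sum_le_sum_of_subset_of_nonneg subset_union_left fun _ _ _ => by positivity
    _ = ∑ k ∈ range (n + 1), (n.choose k : ℝ) * x ^ k := by
        refine (sum_subset subset_union_right fun k _ hk => ?_).symm
        rw [Nat.choose_eq_zero_of_lt (by simpa using hk), Nat.cast_zero, zero_mul]
    _ = (1 + x) ^ n := by
        rw [add_comm (1 : ℝ) x, add_pow]
        exact sum_congr rfl fun k _ => by ring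

lemma sum_Iic_choose_le_exp_mul_div_pow {n d : ℕ} (hdn : d ≤ n) :
    ((∑ k ∈ Iic d, n.choose k : ℕ) : ℝ) ≤ (Real.exp 1 * n / d) ^ d := by
  rcases Nat.eq_zero_or_pos d with rfl | hd
  · simp [← Nat.range_succ_eq_Iic]
  have hn : (0 : ℝ) < n := by exact_mod_cast hd.trans_le hdn
  set x : ℝ := d / n with hx
  have hx0 : 0 < x := by positivity
  have hx1 : x ≤ 1 := (div_le_one hn).mpr (by exact_mod_cast hdn)
  have hscaled : x ^ d * ((∑ k ∈ Iic d, n.choose k : ℕ) : ℝ) ≤ Real.exp 1 ^ d :=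
    calc x ^ d * ((∑ k ∈ Iic d, n.choose k : ℕ) : ℝ)
        ≤ ∑ k ∈ Iic d, (n.choose k : ℝ) * x ^ k := by
          rw [Nat.cast_sum, mul_sum]
          refine sum_le_sum fun k hk => ?_
          rw [mul_comm (x ^ d)]
          exact mul_le_mul_of_nonneg_left (pow_le_pow_of_le_one hx0.le hx1 (mem_Iic.mp hk))
            (by positivity)
      _ ≤ (1 + x) ^ n := sum_Iic_choose_mul_pow_le_one_add_pow n d hx0.le
      _ ≤ Real.exp x ^ n := by gcongr; linarith [Real.add_one_le_exp x]
      _ = Real.exp 1 ^ d := by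
          rw [← Real.exp_nat_mul, Real.exp_one_pow, hx]
          field_simp
  calc ((∑ k ∈ Iic d, n.choose k : ℕ) : ℝ) ≤ Real.exp 1 ^ d / x ^ d := by
        rw [le_div_iff₀ (by positivity), mul_comm]; exact hscaled
    _ = (Real.exp 1 * n / d) ^ d := by
        rw [← div_pow, hx]; field_simp

section Trace

open Classical

variable {X : Type*} (C : Set (X → Bool)) (B : Finset X)

noncomputable def traceFamily : Finset (Finset B) :=
  (proj C B).toFinset.image fun g => ({x | g x = true} : Finset B)

lemma card_traceFamily : #(traceFamily C B) = Nat.card (proj C B) := by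
  have hinj : Function.Injective fun g : B → Bool => ({x | g x = true} : Finset B) := by
    intro g h hgh
    funext x
    simpa using congrArg (x ∈ ·) hgh
  rw [traceFamily, card_image_of_injective _ hinj, Set.toFinset_card, Nat.card_eq_fintype_card]

variable {C B}

lemma Shatters.of_traceFamily {s : Finset B} (hs : (traceFamily C B).Shatters s) :
    Shatters C (s.map (Function.Embedding.subtype _)) := by
  intro g
  obtain ⟨_, hu, hsu⟩ := hs (filter_subset (fun x : B => g x = true) s)
  obtain ⟨g', hg', rfl⟩ := mem_image.mp hu
  obtain ⟨c, hc, hcg'⟩ := Set.mem_toFinset.mp hg'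
  refine ⟨c, hc, ?_⟩
  simp only [mem_map, Function.Embedding.coe_subtype, forall_exists_index, and_imp]
  rintro _ x hx rfl
  have := congrArg (x ∈ ·) hsu
  simp only [mem_inter, mem_filter, mem_univ, hx, true_and] at this
  rw [hcg', Bool.eq_iff_iff, this]

lemma vcDim_traceFamily_le {d : ℕ} (hVC : ∀ B : Finset X, Shatters C B → B.card ≤ d) :
    (traceFamily C B).vcDim ≤ d :=
  Finset.sup_le fun _ hs =>
    (Finset.card_map _).symm.trans_le (hVC _ (Shatters.of_traceFamily (mem_shatterer.mp hs)))

variable (B) in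
theorem card_proj_le_sum_choose {d : ℕ} (hVC : ∀ B : Finset X, Shatters C B → B.card ≤ d) :
    Nat.card (proj C B) ≤ ∑ k ∈ Iic d, B.card.choose k := by
  rw [← card_traceFamily, ← Fintype.card_coe B]
  calc #(traceFamily C B) ≤ #(traceFamily C B).shatterer := card_le_card_shatterer _
    _ ≤ ∑ k ∈ Iic (traceFamily C B).vcDim, (Fintype.card B).choose k :=
        card_shatterer_le_sum_vcDim
    _ ≤ ∑ k ∈ Iic d, (Fintype.card B).choose k :=
        sum_le_sum_of_subset (Iic_subset_Iic.mpr (vcDim_traceFamily_le hVC))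

end Trace

theorem stmt3_general {X : Type*} (C : Set (X → Bool)) (d : ℕ)
    (hVC : ∀ B : Finset X, Shatters C B → B.card ≤ d)
    (B : Finset X) (hB : d < B.card) :
    (Nat.card (proj C B) : ℝ) ≤ (Real.exp 1 * B.card / d) ^ d :=
  calc (Nat.card (proj C B) : ℝ) ≤ ((∑ k ∈ Iic d, B.card.choose k : ℕ) : ℝ) := by
        exact_mod_cast card_proj_le_sum_choose B hVC
    _ ≤ (Real.exp 1 * B.card / d) ^ d := sum_Iic_choose_le_exp_mul_div_pow hB.le

/-- Sauer's lemma: if `VC(C) ≤ d`, `d ≥ 1`, and `|B| > d`, then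
`|Π_C(B)| ≤ (e·|B|/d)^d`. -/
theorem stmt3 {X : Type*} (C : Set (X → Bool)) (d : ℕ) (hd : 1 ≤ d)
    (hVC : ∀ B : Finset X, Shatters C B → B.card ≤ d)
    (B : Finset X) (hB : d < B.card) :
    (Nat.card (proj C B) : ℝ) ≤ (Real.exp 1 * B.card / d) ^ d :=
  stmt3_general C d hVC B hB
end

section
/- Composition preserves approximate differential privacy under the LabelBoostProcedure hypothesis-distribution coupling: if for neighboring databases there is a bijection z ↦ (outcome pairs) such that each coupled pair of relabeled databases are neighboring and the probability weights satisfy w₁(z) ≤ 4e·w₂(z), and A is (ε,δ)-differentially private, then for any event F, Pr[B(S₁) ∈ F] ≤ e^{ε+3}·Pr[B(S₂) ∈ F] + 4e·δ. -/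
/-! Summing the pointwise bound `w₁ z · A(D₁ z) ≤ 4e·w₂ z · (e^ε A(D₂ z) + δ)` over `z` gives
`Pr[B(S₁) ∈ F] ≤ 4e·e^ε Pr[B(S₂) ∈ F] + 4e·δ`, and `4e ≤ e³`. -/

open Finset Real

lemma four_mul_exp_one_le_exp_three : 4 * exp 1 ≤ exp 3 := by
  have h2 : (2 : ℝ) ≤ exp 1 := by linarith [exp_one_gt_d9]
  calc 4 * exp 1 ≤ exp 1 * exp 1 * exp 1 := by gcongr; nlinarith
    _ = exp 3 := by rw [← exp_add, ← exp_add]; norm_num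

lemma Finset.sum_mul_le_of_le_mul_of_le_mul_add {ι : Type*} (s : Finset ι)
    {w₁ w₂ f₁ f₂ : ι → ℝ} {c a δ : ℝ}
    (hw₁ : ∀ i ∈ s, 0 ≤ w₁ i) (hf₁ : ∀ i ∈ s, 0 ≤ f₁ i)
    (hw : ∀ i ∈ s, w₁ i ≤ c * w₂ i) (hf : ∀ i ∈ s, f₁ i ≤ a * f₂ i + δ) :
    ∑ i ∈ s, w₁ i * f₁ i ≤ c * a * ∑ i ∈ s, w₂ i * f₂ i + c * δ * ∑ i ∈ s, w₂ i := by
  calc ∑ i ∈ s, w₁ i * f₁ i ≤ ∑ i ∈ s, c * w₂ i * (a * f₂ i + δ) := by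
        refine sum_le_sum fun i hi => ?_
        have hcw : 0 ≤ c * w₂ i := (hw₁ i hi).trans (hw i hi)
        calc w₁ i * f₁ i ≤ c * w₂ i * f₁ i := mul_le_mul_of_nonneg_right (hw i hi) (hf₁ i hi)
          _ ≤ c * w₂ i * (a * f₂ i + δ) := mul_le_mul_of_nonneg_left (hf i hi) hcw
    _ = c * a * ∑ i ∈ s, w₂ i * f₂ i + c * δ * ∑ i ∈ s, w₂ i := by
        rw [mul_sum, mul_sum, ← sum_add_distrib]
        exact sum_congr rfl fun i _ => by ring

theorem stmt5_general {DB Ω Z : Type*} [Fintype Z]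
    (Neighbor : DB → DB → Prop)
    (A : DB → Set Ω → ℝ) (ε δ : ℝ)
    (hA0 : ∀ D F, 0 ≤ A D F)
    (hDP : ∀ D1 D2, Neighbor D1 D2 → ∀ F : Set Ω,
      A D1 F ≤ Real.exp ε * A D2 F + δ)
    (w1 w2 : Z → ℝ) (hw1 : ∀ z, 0 ≤ w1 z) (hw2 : ∀ z, 0 ≤ w2 z)
    (hsum2 : ∑ z, w2 z = 1)
    (D1 D2 : Z → DB) (hN : ∀ z, Neighbor (D1 z) (D2 z))
    (hcoupling : ∀ z, w1 z ≤ 4 * Real.exp 1 * w2 z) :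
    ∀ F : Set Ω,
      ∑ z, w1 z * A (D1 z) F
        ≤ Real.exp (ε + 3) * ∑ z, w2 z * A (D2 z) F + 4 * Real.exp 1 * δ := by
  intro F
  have hsum := univ.sum_mul_le_of_le_mul_of_le_mul_add (fun z _ => hw1 z)
    (fun z _ => hA0 (D1 z) F) (fun z _ => hcoupling z) (fun z _ => hDP _ _ (hN z) F)
  have hconst : 4 * exp 1 * exp ε ≤ exp (ε + 3) := by
    rw [exp_add, mul_comm (exp ε)]
    gcongr
    exact four_mul_exp_one_le_exp_three
  have hS₂ : 0 ≤ ∑ z, w2 z * A (D2 z) F :=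
    sum_nonneg fun z _ => mul_nonneg (hw2 z) (hA0 _ _)
  rw [hsum2, mul_one] at hsum
  exact hsum.trans (by gcongr)

/-- Coupled composition preserves approximate differential privacy: if `B(Sᵢ)`
first samples `z` with weight `wᵢ z` and then runs the `(ε,δ)`-private `A` on a
database `Dᵢ z`, where for every `z` the databases `D₁ z, D₂ z` are neighboring
and `w₁ z ≤ 4e·w₂ z`, then `Pr[B(S₁) ∈ F] ≤ e^{ε+3}·Pr[B(S₂) ∈ F] + 4e·δ`. -/
theorem stmt5 {DB Ω Z : Type*} [Fintype Z]
    (Neighbor : DB → DB → Prop)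
    (A : DB → Set Ω → ℝ) (ε δ : ℝ) (hδ : 0 ≤ δ)
    (hA0 : ∀ D F, 0 ≤ A D F)
    (hDP : ∀ D1 D2, Neighbor D1 D2 → ∀ F : Set Ω,
      A D1 F ≤ Real.exp ε * A D2 F + δ)
    (w1 w2 : Z → ℝ) (hw1 : ∀ z, 0 ≤ w1 z) (hw2 : ∀ z, 0 ≤ w2 z)
    (hsum1 : ∑ z, w1 z = 1) (hsum2 : ∑ z, w2 z = 1)
    (D1 D2 : Z → DB) (hN : ∀ z, Neighbor (D1 z) (D2 z))
    (hcoupling : ∀ z, w1 z ≤ 4 * Real.exp 1 * w2 z) :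
    ∀ F : Set Ω,
      ∑ z, w1 z * A (D1 z) F
        ≤ Real.exp (ε + 3) * ∑ z, w2 z * A (D2 z) F + 4 * Real.exp 1 * δ :=
  stmt5_general Neighbor A ε δ hA0 hDP w1 w2 hw1 hw2 hsum2 D1 D2 hN hcoupling
end

section
/- Privacy amplification by subsampling: Let A be an (ε*, δ)-differentially private algorithm on databases of size n. Fix ε ≤ 1 and let t = (n/ε)(3 + e^{ε*}). Define B on databases of size t to choose a uniformly random subset J ⊆ {1,…,t} of size n and run A on the sub-database indexed by J (as a multiset). Then B is (ε, (4ε/(3+e^{ε*}))·δ)-differentially private. -/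
/-!
Split the size-`n` index sets `J` according to whether they contain the index `i` where the two
databases differ; those avoiding `i` contribute the same to both averages. For `J ∋ i`, privacy
of `A` bounds the `D1`-sum over these sets in two ways: against the `D2`-sum (replace `D1 i` by
`D2 i`), and, after replacing `i` by each of the `t - n` indices outside `J`, against `n` times
the common sum over the sets avoiding `i`. Since `t` is large, a convex combination of the two
bounds costs only a factor `e^ε`, and the sets containing `i` form a fraction
`n / t = ε / (3 + e^{ε*})` of all sets, which yields the `δ` term.
-/

open Finset

namespace Finset

variable {α : Type*}

theorem map_val_congr_of_notMem {β : Type*} {f g : α → β} {s : Finset α} {a : α} (ha : a ∉ s)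
    (hfg : ∀ b, b ≠ a → f b = g b) : s.val.map f = s.val.map g :=
  Multiset.map_congr rfl fun b hb => hfg b (ne_of_mem_of_not_mem hb ha)

variable [DecidableEq α]

theorem map_val_eq_cons_erase {β : Type*} (f : α → β) {s : Finset α} {a : α} (h : a ∈ s) :
    s.val.map f = f a ::ₘ (s.erase a).val.map f := by
  rw [erase_val, ← Multiset.map_cons, Multiset.cons_erase h]

variable [Fintype α]

def powersetCardWith (n : ℕ) (i : α) : Finset (Finset α) :=
  (powersetCard n univ).filter (i ∈ ·)

def powersetCardWithout (n : ℕ) (i : α) : Finset (Finset α) :=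
  (powersetCard n univ).filter (i ∉ ·)

@[simp]
theorem mem_powersetCardWith {n : ℕ} {i : α} {J : Finset α} :
    J ∈ powersetCardWith n i ↔ #J = n ∧ i ∈ J := by
  simp [powersetCardWith]

@[simp]
theorem mem_powersetCardWithout {n : ℕ} {i : α} {J : Finset α} :
    J ∈ powersetCardWithout n i ↔ #J = n ∧ i ∉ J := by
  simp [powersetCardWithout]

theorem sum_powersetCardWith_add_sum_powersetCardWithout {M : Type*} [AddCommMonoid M]
    (n : ℕ) (i : α) (g : Finset α → M) :
    ∑ J ∈ powersetCardWith n i, g J + ∑ J ∈ powersetCardWithout n i, g J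
      = ∑ J ∈ powersetCard n univ, g J :=
  sum_filter_add_sum_filter_not _ _ _

theorem sum_powersetCardWith_sum_compl {M : Type*} [AddCommMonoid M] (n : ℕ) (i : α)
    (g : Finset α → M) :
    ∑ J ∈ powersetCardWith n i, ∑ j ∈ Jᶜ, g (insert j (J.erase i))
      = n • ∑ K ∈ powersetCardWithout n i, g K := by
  have hK : n • ∑ K ∈ powersetCardWithout n i, g K
      = ∑ K ∈ powersetCardWithout n i, ∑ _j ∈ K, g K := by
    rw [smul_sum]
    refine sum_congr rfl fun K hK => ?_
    rw [sum_const, (mem_powersetCardWithout.mp hK).1]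
  rw [hK, sum_sigma', sum_sigma']
  refine sum_nbij' (fun p => ⟨insert p.2 (p.1.erase i), p.2⟩)
    (fun p => ⟨insert i (p.1.erase p.2), p.2⟩) ?_ ?_ ?_ ?_ (fun _ _ => rfl)
  all_goals
    rintro ⟨J, j⟩ hp
    simp only [mem_sigma, mem_powersetCardWith, mem_powersetCardWithout, mem_compl] at hp ⊢
  · obtain ⟨⟨hJ, hi⟩, hj⟩ := hp
    have hj' : j ∉ J.erase i := fun h => hj (mem_of_mem_erase h)
    refine ⟨⟨?_, by grind⟩, mem_insert_self _ _⟩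
    rw [card_insert_of_notMem hj', card_erase_of_mem hi]
    have := card_pos.mpr ⟨i, hi⟩
    omega
  · obtain ⟨⟨hK, hi⟩, hj⟩ := hp
    have hi' : i ∉ J.erase j := fun h => hi (mem_of_mem_erase h)
    refine ⟨⟨?_, mem_insert_self _ _⟩, by grind⟩
    rw [card_insert_of_notMem hi', card_erase_of_mem hj]
    have := card_pos.mpr ⟨j, hj⟩
    omega
  · obtain ⟨⟨-, hi⟩, hj⟩ := hp
    rw [erase_insert fun h => hj (mem_of_mem_erase h), insert_erase hi]
  · obtain ⟨⟨-, hi⟩, hj⟩ := hp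
    rw [erase_insert fun h => hi (mem_of_mem_erase h), insert_erase hj]

theorem card_powersetCardWith_mul_card (n : ℕ) (i : α) :
    #(powersetCardWith n i) * Fintype.card α = n * #(powersetCard n (univ : Finset α)) := by
  have hdouble := sum_powersetCardWith_sum_compl n i fun _ => 1
  have hsplit := sum_powersetCardWith_add_sum_powersetCardWithout n i fun _ => 1
  simp only [sum_const, smul_eq_mul, mul_one, card_compl] at hdouble hsplit
  rw [sum_congr rfl fun J hJ => by rw [(mem_powersetCardWith.mp hJ).1], sum_const,
    smul_eq_mul] at hdouble
  by_cases hn : n ≤ Fintype.card α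
  · obtain ⟨k, hk⟩ := Nat.exists_eq_add_of_le hn
    rw [hk, Nat.add_sub_cancel_left] at hdouble
    rw [hk, ← hsplit]
    linear_combination hdouble
  · have hP : powersetCard n (univ : Finset α) = ∅ := powersetCard_eq_empty.mpr (by simpa using hn)
    have hW : powersetCardWith n i = ∅ := by simp [powersetCardWith, hP]
    simp [hP, hW]

end Finset

/-- `A` is `(log s, δ)`-differentially private on multisets of size `n`: neighbouring
multisets of size `n` are exactly `x ::ₘ m` and `y ::ₘ m` with `card m = n - 1`. -/
def NeighborDP {X Ω : Type*} (A : Multiset X → Set Ω → ℝ) (n : ℕ) (s δ : ℝ) : Prop :=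
  ∀ (m : Multiset X) (x y : X), Multiset.card m = n - 1 →
    ∀ F : Set Ω, A (x ::ₘ m) F ≤ s * A (y ::ₘ m) F + δ

namespace NeighborDP

variable {α X Ω : Type*} [DecidableEq α] {A : Multiset X → Set Ω → ℝ} {n : ℕ} {s δ : ℝ}

theorem le_cons_erase (h : NeighborDP A n s δ) {J : Finset α} (hJ : #J = n) {i : α} (hi : i ∈ J)
    (D : α → X) (x : X) (F : Set Ω) :
    A (J.val.map D) F ≤ s * A (x ::ₘ (J.erase i).val.map D) F + δ := by
  rw [map_val_eq_cons_erase D hi]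
  exact h _ _ _ (by rw [Multiset.card_map, card_val, card_erase_of_mem hi, hJ]) F

variable [Fintype α]

theorem sum_powersetCardWith_le (h : NeighborDP A n s δ) {D D' : α → X} {i : α}
    (hD : ∀ j, j ≠ i → D j = D' j) (F : Set Ω) :
    ∑ J ∈ powersetCardWith n i, A (J.val.map D) F
      ≤ s * ∑ J ∈ powersetCardWith n i, A (J.val.map D') F + #(powersetCardWith n i) * δ := by
  calc ∑ J ∈ powersetCardWith n i, A (J.val.map D) F
      ≤ ∑ J ∈ powersetCardWith n i, (s * A (J.val.map D') F + δ) := by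
        refine sum_le_sum fun J hJ => ?_
        obtain ⟨hJ, hi⟩ := mem_powersetCardWith.mp hJ
        rw [map_val_eq_cons_erase D' hi,
          map_val_congr_of_notMem (notMem_erase i J) fun j hj => (hD j hj).symm]
        exact h.le_cons_erase hJ hi D _ F
    _ = _ := by rw [sum_add_distrib, ← mul_sum, sum_const, nsmul_eq_mul]

theorem card_sub_mul_sum_powersetCardWith_le (h : NeighborDP A n s δ) (D : α → X) (i : α)
    (F : Set Ω) :
    ((Fintype.card α - n : ℕ) : ℝ) * ∑ J ∈ powersetCardWith n i, A (J.val.map D) F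
      ≤ s * (n * ∑ K ∈ powersetCardWithout n i, A (K.val.map D) F)
        + (Fintype.card α - n : ℕ) * (#(powersetCardWith n i) * δ) := by
  have hcompl (f : Finset α → ℝ) : ∑ J ∈ powersetCardWith n i, ∑ _j ∈ Jᶜ, f J
      = ((Fintype.card α - n : ℕ) : ℝ) * ∑ J ∈ powersetCardWith n i, f J := by
    rw [mul_sum]
    refine sum_congr rfl fun J hJ => ?_
    rw [sum_const, card_compl, (mem_powersetCardWith.mp hJ).1, nsmul_eq_mul]
  calc ((Fintype.card α - n : ℕ) : ℝ) * ∑ J ∈ powersetCardWith n i, A (J.val.map D) F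
      = ∑ J ∈ powersetCardWith n i, ∑ _j ∈ Jᶜ, A (J.val.map D) F := (hcompl _).symm
    _ ≤ ∑ J ∈ powersetCardWith n i, ∑ j ∈ Jᶜ, (s * A ((insert j (J.erase i)).val.map D) F + δ) := by
        refine sum_le_sum fun J hJ => sum_le_sum fun j hj => ?_
        obtain ⟨hJ, hi⟩ := mem_powersetCardWith.mp hJ
        rw [insert_val_of_notMem fun h => mem_compl.mp hj (mem_of_mem_erase h), Multiset.map_cons]
        exact h.le_cons_erase hJ hi D _ F
    _ = _ := by
        simp only [sum_add_distrib, ← mul_sum]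
        rw [sum_powersetCardWith_sum_compl n i fun K => A (K.val.map D) F, hcompl fun _ => δ,
          sum_const, nsmul_eq_mul, nsmul_eq_mul]

end NeighborDP

theorem add_le_mul_add_of_le_of_mul_le {a b c d s E u m : ℝ} (hE : 1 ≤ E) (hu : 0 < u)
    (hb : 0 ≤ b) (hc : 0 ≤ c) (h₁ : a ≤ s * b + d) (h₂ : u * a ≤ s * (m * c) + u * d)
    (hm : (s - E) * m ≤ (E - 1) * u) :
    a + c ≤ E * (b + c) + d := by
  rcases le_or_gt s E with hsE | hEs
  · nlinarith [mul_le_mul_of_nonneg_right hsE hb, mul_le_mul_of_nonneg_right hE hc]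
  · have hs : 0 < s := by linarith
    -- weigh `h₁` by `E * u` and `h₂` by `s - E`
    have key : s * (u * (a + c)) ≤ s * (u * (E * (b + c) + d)) := by
      nlinarith [mul_le_mul_of_nonneg_left h₁ (by positivity : 0 ≤ E * u),
        mul_le_mul_of_nonneg_left h₂ (sub_nonneg.mpr hEs.le),
        mul_le_mul_of_nonneg_left hm (by positivity : 0 ≤ s * c)]
    exact le_of_mul_le_mul_left (le_of_mul_le_mul_left key hs) hu

theorem sub_exp_mul_le_exp_sub_one_mul {ε s n t : ℝ} (hε : 0 < ε) (hε1 : ε ≤ 1) (hs : 0 ≤ s)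
    (hn : 0 ≤ n) (ht : ε * t = n * (3 + s)) :
    (s - Real.exp ε) * n ≤ (Real.exp ε - 1) * (t - n) := by
  have hexp : ε ≤ Real.exp ε - 1 := by linarith [Real.add_one_le_exp ε]
  refine le_of_mul_le_mul_left ?_ hε
  nlinarith [mul_nonneg (sub_nonneg.mpr hexp) (mul_nonneg hn (by linarith : 0 ≤ 3 + s - ε)),
    mul_nonneg hε.le (mul_nonneg hn (by linarith [Real.exp_pos ε] : 0 ≤ 3 - ε + Real.exp ε))]

theorem stmt6_general {X Ω : Type*} (n t : ℕ) (hn : 1 ≤ n) (hnt : n ≤ t)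
    (ε εs δ : ℝ) (hε : 0 < ε) (hε1 : ε ≤ 1) (hδ : 0 ≤ δ)
    (ht : (t : ℝ) = ((n : ℝ) / ε) * (3 + Real.exp εs))
    (A : Multiset X → Set Ω → ℝ)
    (hA0 : ∀ D F, 0 ≤ A D F)
    (hDP : ∀ (m : Multiset X) (x y : X), Multiset.card m = n - 1 →
      ∀ F : Set Ω, A (x ::ₘ m) F ≤ Real.exp εs * A (y ::ₘ m) F + δ)
    (D1 D2 : Fin t → X) (i : Fin t)
    (heq : ∀ j, j ≠ i → D1 j = D2 j) (F : Set Ω) :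
    (∑ J ∈ Finset.powersetCard n (Finset.univ : Finset (Fin t)),
        A (Multiset.map D1 J.val) F) /
      ((Finset.powersetCard n (Finset.univ : Finset (Fin t))).card : ℝ)
      ≤ Real.exp ε *
          ((∑ J ∈ Finset.powersetCard n (Finset.univ : Finset (Fin t)),
              A (Multiset.map D2 J.val) F) /
            ((Finset.powersetCard n (Finset.univ : Finset (Fin t))).card : ℝ))
        + (4 * ε / (3 + Real.exp εs)) * δ := by
  have hWithout : ∑ K ∈ powersetCardWithout n i, A (K.val.map D1) F
      = ∑ K ∈ powersetCardWithout n i, A (K.val.map D2) F :=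
    sum_congr rfl fun K hK => by rw [map_val_congr_of_notMem (mem_powersetCardWithout.mp hK).2 heq]
  have hN : (0 : ℝ) < #(powersetCard n (univ : Finset (Fin t))) := by
    simp [card_powersetCard, Nat.choose_pos hnt]
  have hεt : ε * t = n * (3 + Real.exp εs) := by rw [ht]; field_simp
  have hfrac : (#(powersetCardWith n i) : ℝ) * (3 + Real.exp εs)
      = ε * #(powersetCard n (univ : Finset (Fin t))) := by
    have hcount :
        (#(powersetCardWith n i) * t : ℝ) = n * #(powersetCard n (univ : Finset (Fin t))) := by
      exact_mod_cast Fintype.card_fin t ▸ card_powersetCardWith_mul_card n i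
    refine mul_left_cancel₀ (by positivity : (n : ℝ) ≠ 0) ?_
    linear_combination (-(#(powersetCardWith n i) : ℝ)) * hεt + ε * hcount
  have hδ' : (#(powersetCardWith n i) : ℝ) * δ
      ≤ 4 * ε / (3 + Real.exp εs) * δ * #(powersetCard n (univ : Finset (Fin t))) := by
    rw [div_mul_eq_mul_div, div_mul_eq_mul_div, le_div_iff₀ (by positivity)]
    linear_combination δ * hfrac + 3 * mul_nonneg (mul_nonneg hε.le hδ) hN.le
  have hswap := NeighborDP.card_sub_mul_sum_powersetCardWith_le hDP D1 i F
  rw [hWithout, Fintype.card_fin, Nat.cast_sub hnt] at hswap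
  have hnt' : (n : ℝ) < t := by
    have : (1 : ℝ) ≤ n := by exact_mod_cast hn
    nlinarith [Real.exp_pos εs]
  have hmain := add_le_mul_add_of_le_of_mul_le (Real.one_le_exp hε.le) (sub_pos.mpr hnt')
    (sum_nonneg fun J _ => hA0 _ F) (sum_nonneg fun K _ => hA0 _ F)
    (NeighborDP.sum_powersetCardWith_le hDP heq F) hswap
    (sub_exp_mul_le_exp_sub_one_mul hε hε1 (Real.exp_pos εs).le (Nat.cast_nonneg n) hεt)
  simp only [← sum_powersetCardWith_add_sum_powersetCardWithout n i, hWithout]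
  rw [div_le_iff₀ hN, add_mul, mul_assoc, div_mul_cancel₀ _ hN.ne']
  linarith only [hmain, hδ']

/-- Privacy amplification by subsampling: if `A` is `(ε*,δ)`-differentially
private on multisets of size `n`, `ε ≤ 1`, and `t = (n/ε)(3 + e^{ε*})`, then the
algorithm that picks a uniformly random size-`n` subset `J ⊆ [t]` and runs `A`
on the induced sub-multiset is `(ε, (4ε/(3+e^{ε*}))·δ)`-differentially private. -/
theorem stmt6 {X Ω : Type*} (n t : ℕ) (hn : 1 ≤ n) (hnt : n ≤ t)
    (ε εs δ : ℝ) (hε : 0 < ε) (hε1 : ε ≤ 1) (hδ : 0 ≤ δ)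
    (ht : (t : ℝ) = ((n : ℝ) / ε) * (3 + Real.exp εs))
    (A : Multiset X → Set Ω → ℝ)
    (hA0 : ∀ D F, 0 ≤ A D F) (hA1 : ∀ D F, A D F ≤ 1)
    (hDP : ∀ (m : Multiset X) (x y : X), Multiset.card m = n - 1 →
      ∀ F : Set Ω, A (x ::ₘ m) F ≤ Real.exp εs * A (y ::ₘ m) F + δ)
    (D1 D2 : Fin t → X) (i : Fin t) (hne : D1 i ≠ D2 i)
    (heq : ∀ j, j ≠ i → D1 j = D2 j) (F : Set Ω) :
    (∑ J ∈ Finset.powersetCard n (Finset.univ : Finset (Fin t)),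
        A (Multiset.map D1 J.val) F) /
      ((Finset.powersetCard n (Finset.univ : Finset (Fin t))).card : ℝ)
      ≤ Real.exp ε *
          ((∑ J ∈ Finset.powersetCard n (Finset.univ : Finset (Fin t)),
              A (Multiset.map D2 J.val) F) /
            ((Finset.powersetCard n (Finset.univ : Finset (Fin t))).card : ℝ))
        + (4 * ε / (3 + Real.exp εs)) * δ :=
  stmt6_general n t hn hnt ε εs δ hε hε1 hδ ht A hA0 hDP D1 D2 i heq F
end

section
/- Key counting step of the subsampling lemma: for a uniformly random subset J of size n drawn from {1,…,t} and a fixed index i, Pr[B(D) ∈ F ∧ i ∈ J] ≤ (n/t)·e^{ε*}·Pr[A(D'_J) ∈ F | i ∉ J] + (n/t)·δ, where D, D' are neighboring databases differing at index i and A is (ε*, δ)-differentially private. -/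
/-!
Double counting over the pairs `(J, j)` with `|J| = n`, `i ∈ J`, `j ∉ J`. Each such pair gives
the sample `Q = J - i + j`, which avoids `i`; since `D` and `D'` agree off `i`, the multisets
`D_J` and `D'_Q` differ in one element, so differential privacy bounds `A(D_J)` by
`e^ε A(D'_Q) + δ`. Each `J` occurs with `t - n` choices of `j`, and `(J, j) ↦ (Q, j)` is a
bijection onto the pairs with `i ∉ Q`, `j ∈ Q`, in which each `Q` occurs `n` times. Hence
`(t - n) Σ_{i ∈ J} A(D_J) ≤ n (e^ε Σ_{i ∉ Q} A(D'_Q) + #{Q : i ∉ Q} δ)`, and the identity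
`(t - n) C(t, n) = t C(t - 1, n)` turns this into the stated bound on averages.
-/

open Finset

theorem Nat.sub_mul_choose_eq_mul_sub_one_choose (m k : ℕ) :
    (m - k) * m.choose k = m * (m - 1).choose k := by
  cases m with
  | zero => simp
  | succ m => rw [Nat.add_sub_cancel, mul_comm, mul_comm (m + 1), Nat.choose_mul_succ_eq]

namespace Finset

variable {α : Type*} [DecidableEq α]

theorem map_val_eq_cons_map_erase_val {X : Type*} (D : α → X) {J : Finset α} {i : α}
    (hi : i ∈ J) : J.val.map D = D i ::ₘ (J.erase i).val.map D := by
  rw [erase_val, ← Multiset.map_cons, Multiset.cons_erase hi]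

variable [Fintype α]

theorem filter_notMem_powersetCard_univ (n : ℕ) (i : α) :
    (powersetCard n univ).filter (fun J => i ∉ J) = powersetCard n (univ.erase i) := by
  ext J
  simp only [mem_filter, mem_powersetCard, subset_univ, true_and, subset_erase]
  tauto

theorem card_filter_notMem_powersetCard_univ (n : ℕ) (i : α) :
    #((powersetCard n univ).filter (fun J => i ∉ J)) = (Fintype.card α - 1).choose n := by
  rw [filter_notMem_powersetCard_univ, card_powersetCard, card_erase_of_mem (mem_univ i),
    card_univ]

theorem sum_filter_mem_sum_compl_insert_erase {M : Type*} [AddCommMonoid M] (n : ℕ) (i : α)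
    (f : Finset α → M) :
    ∑ J ∈ (powersetCard n univ).filter (fun J => i ∈ J), ∑ j ∈ Jᶜ, f (insert j (J.erase i)) =
      n • ∑ Q ∈ (powersetCard n univ).filter (fun J => i ∉ J), f Q := by
  have hconst : ∀ Q ∈ (powersetCard n univ).filter (fun J => i ∉ J), ∑ _j ∈ Q, f Q = n • f Q :=
    fun Q hQ => by rw [sum_const, (mem_powersetCard.1 (mem_filter.1 hQ).1).2]
  rw [smul_sum, ← sum_congr rfl hconst, sum_sigma', sum_sigma']
  refine sum_nbij' (fun p => ⟨insert p.2 (p.1.erase i), p.2⟩)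
    (fun p => ⟨insert i (p.1.erase p.2), p.2⟩) ?_ ?_ ?_ ?_ fun _ _ => rfl
  · rintro ⟨J, j⟩ h
    simp only [mem_sigma, mem_filter, mem_powersetCard, subset_univ, true_and,
      mem_compl] at h ⊢
    grind
  · rintro ⟨Q, j⟩ h
    simp only [mem_sigma, mem_filter, mem_powersetCard, subset_univ, true_and,
      mem_compl] at h ⊢
    grind
  · rintro ⟨J, j⟩ h
    simp only [mem_sigma, mem_filter, mem_compl] at h
    have hj : j ∉ J.erase i := fun hj => h.2 (mem_of_mem_erase hj)
    simp only [erase_insert hj, insert_erase h.1.2]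
  · rintro ⟨Q, j⟩ h
    simp only [mem_sigma, mem_filter] at h
    have hi : i ∉ Q.erase j := fun hi => h.1.2 (mem_of_mem_erase hi)
    simp only [erase_insert hi, insert_erase h.2]

theorem card_sub_mul_sum_filter_mem_le (n : ℕ) (i : α) {g h : Finset α → ℝ} {c δ : ℝ}
    (hgh : ∀ J : Finset α, #J = n → i ∈ J → ∀ j ∉ J, g J ≤ c * h (insert j (J.erase i)) + δ) :
    ((Fintype.card α - n : ℕ) : ℝ) * ∑ J ∈ (powersetCard n univ).filter (fun J => i ∈ J), g J ≤
      n * (c * ∑ Q ∈ (powersetCard n univ).filter (fun J => i ∉ J), h Q +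
        #((powersetCard n univ).filter (fun J => i ∉ J)) * δ) :=
  calc _ = ∑ J ∈ (powersetCard n univ).filter (fun J => i ∈ J), ∑ _j ∈ Jᶜ, g J := by
        rw [mul_sum]
        refine sum_congr rfl fun J hJ => ?_
        rw [sum_const, card_compl, (mem_powersetCard.1 (mem_filter.1 hJ).1).2, nsmul_eq_mul]
    _ ≤ ∑ J ∈ (powersetCard n univ).filter (fun J => i ∈ J), ∑ j ∈ Jᶜ,
          (c * h (insert j (J.erase i)) + δ) := by
        refine sum_le_sum fun J hJ => sum_le_sum fun j hj => ?_
        obtain ⟨hJn, hiJ⟩ := mem_filter.1 hJ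
        exact hgh J (mem_powersetCard.1 hJn).2 hiJ j (mem_compl.1 hj)
    _ = n • ∑ Q ∈ (powersetCard n univ).filter (fun J => i ∉ J), (c * h Q + δ) :=
        sum_filter_mem_sum_compl_insert_erase n i fun Q => c * h Q + δ
    _ = _ := by rw [nsmul_eq_mul, sum_add_distrib, ← mul_sum, sum_const, nsmul_eq_mul]

end Finset

theorem le_exp_mul_map_insert_erase_add {α X Ω : Type*} [DecidableEq α] {n : ℕ} {εs δ : ℝ}
    {A : Multiset X → Set Ω → ℝ}
    (hDP : ∀ (m : Multiset X) (x y : X), Multiset.card m = n - 1 →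
      ∀ F : Set Ω, A (x ::ₘ m) F ≤ Real.exp εs * A (y ::ₘ m) F + δ)
    {D D' : α → X} {i : α} (heq : ∀ j, j ≠ i → D j = D' j) (F : Set Ω) {J : Finset α}
    (hJ : #J = n) (hi : i ∈ J) {j : α} (hj : j ∉ J) :
    A (J.val.map D) F ≤ Real.exp εs * A ((insert j (J.erase i)).val.map D') F + δ := by
  have hagree : (J.erase i).val.map D' = (J.erase i).val.map D :=
    Multiset.map_congr rfl fun x hx => (heq x (ne_of_mem_erase hx)).symm
  rw [map_val_eq_cons_map_erase_val D hi,
    insert_val_of_notMem fun h => hj (mem_of_mem_erase h), Multiset.map_cons, hagree]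
  exact hDP _ _ _ (by rw [Multiset.card_map, ← hJ]; exact card_erase_of_mem hi) F

theorem stmt7_general {X Ω : Type*} (n t : ℕ) (hnt : n < t)
    (εs δ : ℝ)
    (A : Multiset X → Set Ω → ℝ)
    (hDP : ∀ (m : Multiset X) (x y : X), Multiset.card m = n - 1 →
      ∀ F : Set Ω, A (x ::ₘ m) F ≤ Real.exp εs * A (y ::ₘ m) F + δ)
    (D D' : Fin t → X) (i : Fin t) (heq : ∀ j, j ≠ i → D j = D' j) (F : Set Ω) :
    (∑ J ∈ (Finset.powersetCard n (Finset.univ : Finset (Fin t))).filter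
          (fun J => i ∈ J),
        A (Multiset.map D J.val) F) /
      ((Finset.powersetCard n (Finset.univ : Finset (Fin t))).card : ℝ)
      ≤ ((n : ℝ) / t) * Real.exp εs *
          ((∑ J ∈ (Finset.powersetCard n (Finset.univ : Finset (Fin t))).filter
                (fun J => i ∉ J),
              A (Multiset.map D' J.val) F) /
            (((Finset.powersetCard n (Finset.univ : Finset (Fin t))).filter
                (fun J => i ∉ J)).card : ℝ))
        + ((n : ℝ) / t) * δ := by
  have hkey := card_sub_mul_sum_filter_mem_le n i
    (g := fun J => A (J.val.map D) F) (h := fun Q => A (Q.val.map D') F) fun J hJ hi j hj =>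
    le_exp_mul_map_insert_erase_add hDP heq F hJ hi hj
  rw [Fintype.card_fin, Nat.cast_sub hnt.le, card_filter_notMem_powersetCard_univ,
    Fintype.card_fin] at hkey
  rw [card_powersetCard, card_univ, Fintype.card_fin, card_filter_notMem_powersetCard_univ,
    Fintype.card_fin]
  set a := ∑ J ∈ (powersetCard n univ).filter (fun J => i ∈ J), A (J.val.map D) F
  set b := ∑ Q ∈ (powersetCard n univ).filter (fun J => i ∉ J), A (Q.val.map D') F
  have hchoose : ((t : ℝ) - n) * t.choose n = t * (t - 1).choose n := by
    rw [← Nat.cast_sub hnt.le]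
    exact_mod_cast Nat.sub_mul_choose_eq_mul_sub_one_choose t n
  have htn : (0 : ℝ) < t - n := sub_pos.2 (by exact_mod_cast hnt)
  have ht : (0 : ℝ) < t := by exact_mod_cast (Nat.zero_le n).trans_lt hnt
  have hM : (0 : ℝ) < (t - 1).choose n := by exact_mod_cast Nat.choose_pos (by omega)
  calc a / t.choose n = ((t - n) * a) / (t * (t - 1).choose n) := by
        rw [← hchoose, mul_div_mul_left _ _ htn.ne']
    _ ≤ n * (Real.exp εs * b + (t - 1).choose n * δ) / (t * (t - 1).choose n) := by gcongr
    _ = _ := by field_simp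

/-- Key counting step of the subsampling lemma:
`Pr[B(D) ∈ F ∧ i ∈ J] ≤ (n/t)·e^{ε*}·Pr[A(D'_J) ∈ F | i ∉ J] + (n/t)·δ`,
where `J` is a uniformly random size-`n` subset of `[t]`, and `D, D'` are
neighboring databases differing at index `i`. -/
theorem stmt7 {X Ω : Type*} (n t : ℕ) (hn : 1 ≤ n) (hnt : n < t)
    (εs δ : ℝ) (hδ : 0 ≤ δ)
    (A : Multiset X → Set Ω → ℝ)
    (hA0 : ∀ D F, 0 ≤ A D F) (hA1 : ∀ D F, A D F ≤ 1)
    (hDP : ∀ (m : Multiset X) (x y : X), Multiset.card m = n - 1 →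
      ∀ F : Set Ω, A (x ::ₘ m) F ≤ Real.exp εs * A (y ::ₘ m) F + δ)
    (D D' : Fin t → X) (i : Fin t) (heq : ∀ j, j ≠ i → D j = D' j) (F : Set Ω) :
    (∑ J ∈ (Finset.powersetCard n (Finset.univ : Finset (Fin t))).filter
          (fun J => i ∈ J),
        A (Multiset.map D J.val) F) /
      ((Finset.powersetCard n (Finset.univ : Finset (Fin t))).card : ℝ)
      ≤ ((n : ℝ) / t) * Real.exp εs *
          ((∑ J ∈ (Finset.powersetCard n (Finset.univ : Finset (Fin t))).filter
                (fun J => i ∉ J),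
              A (Multiset.map D' J.val) F) /
            (((Finset.powersetCard n (Finset.univ : Finset (Fin t))).filter
                (fun J => i ∉ J)).card : ℝ))
        + ((n : ℝ) / t) * δ :=
  stmt7_general n t hnt εs δ A hDP D D' i heq F
end

section
/- In the LabelBoost sample-size recursion, if |S_{i-1}| ≥ (4800/α_{i-1})·d·log(14/(α_{i-1}β_{i-1})) with α_i = α/(10·2^i), β_i = β/(4·2^i), d ≥ 1, and |S_i| = (1/100)·β_{i-1}·d·exp(α_{i-1}|S_{i-1}|/(200d)), then |S_i| ≥ (4800/α_i)·d·log(14/(α_i β_i)). -/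
/-!
Write `a = α_{i-1}`, `b = β_{i-1}` and `x = 14/(ab) ≥ 560`. The hypothesis on `|S_{i-1}|` makes the
exponent `a|S_{i-1}|/(200d)` at least `24 log x`, so `|S_i| ≥ (1/100) b d x^24 = (14/100) (d/a) x^23`.
Halving the parameters costs only a factor `2` in `4800/a` and turns `x` into `4x`, and
`(9600 d/a) log (4x)` is far below `(14/100) (d/a) x^23` once `x ≥ 560`.
-/

open Real

lemma div_mul_two_pow_le_inv {c k : ℝ} (hc : c ≤ 1) (hk : 0 < k) (n : ℕ) :
    c / (k * 2 ^ n) ≤ 1 / k := by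
  have h1 : (1 : ℝ) ≤ 2 ^ n := one_le_pow₀ (by norm_num)
  rw [div_le_div_iff₀ (by positivity) hk]
  nlinarith

lemma half_div_mul_two_pow_pred_le {c k : ℝ} (hc : 0 ≤ c) (hk : 0 < k) (i : ℕ) :
    c / (k * 2 ^ (i - 1)) / 2 ≤ c / (k * 2 ^ i) := by
  have hpow : (2 : ℝ) ^ i ≤ 2 ^ (i - 1) * 2 := by
    cases i with
    | zero => norm_num
    | succ j => rw [pow_succ, Nat.add_sub_cancel]
  rw [div_div]
  exact div_le_div_of_nonneg_left hc (by positivity) (by rw [mul_assoc]; gcongr)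

lemma log_four_mul_le_pow {x : ℝ} (hx : 560 ≤ x) : 960000 * log (4 * x) ≤ 14 * x ^ 23 := by
  have hlog : log (4 * x) ≤ 4 * x := by
    linarith [log_le_sub_one_of_pos (show 0 < 4 * x by positivity)]
  have hpow : (560 : ℝ) ^ 22 ≤ x ^ 22 := by gcongr
  calc 960000 * log (4 * x) ≤ 960000 * (4 * x) := by gcongr
    _ ≤ 14 * 560 ^ 22 * x := by nlinarith
    _ ≤ 14 * x ^ 22 * x := by gcongr
    _ = 14 * x ^ 23 := by ring

lemma labelBoost_step {a b d S : ℝ} (ha : 0 < a) (hb : 0 < b) (hab : a * b ≤ 1 / 40)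
    (hd : 0 < d) (hS : 4800 / a * d * log (14 / (a * b)) ≤ S) :
    9600 / a * d * log (56 / (a * b)) ≤ 1 / 100 * b * d * exp (a * S / (200 * d)) := by
  set x := 14 / (a * b) with hx_def
  have hx : 560 ≤ x := by
    rw [hx_def, le_div_iff₀ (by positivity)]
    linarith
  have habx : a * b * x = 14 := by
    rw [hx_def]
    field_simp
  have hexponent : 24 * log x ≤ a * S / (200 * d) := by
    rw [le_div_iff₀ (by positivity)]
    have h := mul_le_mul_of_nonneg_left hS ha.le
    rw [show a * (4800 / a * d * log x) = 4800 * d * log x by field_simp] at h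
    linarith
  have hexp : x ^ 24 ≤ exp (a * S / (200 * d)) := by
    calc x ^ 24 = exp (24 * log x) := by
          rw [show (24 : ℝ) * log x = log (x ^ 24) by rw [log_pow]; norm_num,
            exp_log (by positivity)]
      _ ≤ exp (a * S / (200 * d)) := exp_le_exp.mpr hexponent
  calc 9600 / a * d * log (56 / (a * b)) = d / (100 * a) * (960000 * log (4 * x)) := by
        rw [hx_def]
        field_simp
        ring_nf
    _ ≤ d / (100 * a) * (14 * x ^ 23) :=
        mul_le_mul_of_nonneg_left (log_four_mul_le_pow hx) (by positivity)
    _ = 1 / 100 * b * d * x ^ 24 := by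
        rw [← habx]
        field_simp
    _ ≤ 1 / 100 * b * d * exp (a * S / (200 * d)) := by gcongr

lemma mul_log_le_of_half_le {a b a' b' d : ℝ} (ha : 0 < a) (hb : 0 < b) (ha' : a / 2 ≤ a')
    (hb' : b / 2 ≤ b') (hab' : a' * b' ≤ 14) (hd : 0 ≤ d) :
    4800 / a' * d * log (14 / (a' * b')) ≤ 9600 / a * d * log (56 / (a * b)) := by
  have hab'pos : 0 < a' * b' := by nlinarith
  have hcoef : 4800 / a' ≤ 9600 / a := by
    rw [div_le_div_iff₀ (by linarith) ha]
    linarith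
  have hlog : log (14 / (a' * b')) ≤ log (56 / (a * b)) := by
    apply log_le_log (by positivity)
    rw [div_le_div_iff₀ hab'pos (by positivity)]
    nlinarith [mul_le_mul ha' hb' (by positivity) (by linarith)]
  have hlog0 : 0 ≤ log (14 / (a' * b')) :=
    log_nonneg ((one_le_div hab'pos).mpr hab')
  gcongr

theorem stmt13_general (α β d S1 S2 : ℝ) (i : ℕ)
    (hα : 0 < α) (hα1 : α ≤ 1) (hβ : 0 < β) (hβ1 : β ≤ 1) (hd : 1 ≤ d)
    (hS1 : (4800 / (α / (10 * 2 ^ (i - 1)))) * d *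
        Real.log (14 / ((α / (10 * 2 ^ (i - 1))) * (β / (4 * 2 ^ (i - 1))))) ≤ S1)
    (hS2 : S2 = (1 / 100) * (β / (4 * 2 ^ (i - 1))) * d *
        Real.exp ((α / (10 * 2 ^ (i - 1))) * S1 / (200 * d))) :
    (4800 / (α / (10 * 2 ^ i))) * d *
        Real.log (14 / ((α / (10 * 2 ^ i)) * (β / (4 * 2 ^ i)))) ≤ S2 := by
  have hbound : ∀ n : ℕ, α / (10 * 2 ^ n) * (β / (4 * 2 ^ n)) ≤ 1 / 40 := fun n => by
    have := mul_le_mul (div_mul_two_pow_le_inv hα1 (by norm_num : (0 : ℝ) < 10) n)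
      (div_mul_two_pow_le_inv hβ1 (by norm_num : (0 : ℝ) < 4) n) (by positivity) (by norm_num)
    linarith
  rw [hS2]
  refine (mul_log_le_of_half_le (by positivity) (by positivity)
    (half_div_mul_two_pow_pred_le hα.le (by norm_num) i)
    (half_div_mul_two_pow_pred_le hβ.le (by norm_num) i)
    ((hbound i).trans (by norm_num)) (by linarith)).trans ?_
  exact labelBoost_step (by positivity) (by positivity) (hbound (i - 1)) (by linarith) hS1

/-- Inductive step of the LabelBoost sample-size recursion: with
`αᵢ = α/(10·2^i)` and `βᵢ = β/(4·2^i)`, if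
`|S_{i-1}| ≥ (4800/α_{i-1})·d·log(14/(α_{i-1}β_{i-1}))` and
`|S_i| = (1/100)·β_{i-1}·d·exp(α_{i-1}|S_{i-1}|/(200d))`, then
`|S_i| ≥ (4800/α_i)·d·log(14/(αᵢβᵢ))`. -/
theorem stmt13 (α β d S1 S2 : ℝ) (i : ℕ) (hi : 1 ≤ i)
    (hα : 0 < α) (hα1 : α ≤ 1) (hβ : 0 < β) (hβ1 : β ≤ 1) (hd : 1 ≤ d)
    (hS1 : (4800 / (α / (10 * 2 ^ (i - 1)))) * d *
        Real.log (14 / ((α / (10 * 2 ^ (i - 1))) * (β / (4 * 2 ^ (i - 1))))) ≤ S1)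
    (hS2 : S2 = (1 / 100) * (β / (4 * 2 ^ (i - 1))) * d *
        Real.exp ((α / (10 * 2 ^ (i - 1))) * S1 / (200 * d))) :
    (4800 / (α / (10 * 2 ^ i))) * d *
        Real.log (14 / ((α / (10 * 2 ^ i)) * (β / (4 * 2 ^ i)))) ≤ S2 :=
  stmt13_general α β d S1 S2 i hα hα1 hβ hβ1 hd hS1 hS2
end

section
/- For neighboring databases in LabelBoostProcedure, the exponential-mechanism weights are comparable: if H₁ and H₂ are hypothesis sets such that for every z in a common index set, H₁ contains at most two hypotheses h_{1,z}, h'_{1,z} and H₂ at most two h_{2,z}, h'_{2,z}, with |q(S₁, h) − q(S₂, h')| ≤ 1 for every pair h ∈ {h_{1,z}, h'_{1,z}}, h' ∈ {h_{2,z}, h'_{2,z}} and |q(S_i,h_{i,z}) − q(S_i,h'_{i,z})| ≤ 1, then the probability w_{1,z} that the exponential mechanism (ε=1) on (H₁, S₁) outputs a hypothesis in {h_{1,z}, h'_{1,z}} satisfies w_{1,z} ≤ 4e·w_{2,z}. -/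
/-!
Every score in a pair of `H₁` is within `1` of a score in the matching pair of `H₂`, and vice
versa, so each pair's total weight `∑ exp (q f / 2)` changes by at most the factor
`2 e^{1/2}`: one factor `e^{1/2}` from the score, one factor `2` because a pair has at most
two members. Summing over the partition, the normalising constants change by the same factor
in the opposite direction, and the two factors multiply to `4e`.
-/

open Finset Real

namespace ExpMech

variable {α ι : Type*}

/-- Unnormalised weight of a set of outputs under the exponential mechanism with `ε = 1`. -/
noncomputable def weight (q : α → ℝ) (s : Finset α) : ℝ := ∑ f ∈ s, exp (q f / 2)

lemma weight_nonneg (q : α → ℝ) (s : Finset α) : 0 ≤ weight q s :=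
  sum_nonneg fun _ _ ↦ (exp_pos _).le

lemma weight_pos (q : α → ℝ) {s : Finset α} (hs : s.Nonempty) : 0 < weight q s :=
  sum_pos (fun _ _ ↦ exp_pos _) hs

lemma exp_half_le_of_abs_sub_le {a b : ℝ} (h : |a - b| ≤ 1) :
    exp (a / 2) ≤ exp (1 / 2) * exp (b / 2) := by
  rw [← exp_add]
  exact exp_le_exp.mpr (by linarith [(abs_le.mp h).2])

lemma weight_le_card_mul_weight {p q : α → ℝ} {s t : Finset α} {g : α} (hg : g ∈ t)
    (h : ∀ f ∈ s, |p f - q g| ≤ 1) :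
    weight p s ≤ #s * exp (1 / 2) * weight q t :=
  calc weight p s ≤ ∑ _f ∈ s, exp (1 / 2) * exp (q g / 2) :=
        sum_le_sum fun f hf ↦ exp_half_le_of_abs_sub_le (h f hf)
    _ = #s * exp (1 / 2) * exp (q g / 2) := by rw [sum_const, nsmul_eq_mul, mul_assoc]
    _ ≤ #s * exp (1 / 2) * weight q t := by
        gcongr
        exact single_le_sum (f := fun f ↦ exp (q f / 2)) (fun _ _ ↦ (exp_pos _).le) hg

lemma weight_pair_le [DecidableEq α] {p q : α → ℝ} {a b c d : α}
    (h : ∀ f ∈ ({a, b} : Finset α), ∀ g ∈ ({c, d} : Finset α), |p f - q g| ≤ 1) :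
    weight p {a, b} ≤ 2 * exp (1 / 2) * weight q {c, d} :=
  calc weight p {a, b} ≤ #{a, b} * exp (1 / 2) * weight q {c, d} :=
        weight_le_card_mul_weight (mem_insert_self c {d}) fun f hf ↦ h f hf c (by simp)
    _ ≤ 2 * exp (1 / 2) * weight q {c, d} := by
        gcongr
        · exact weight_nonneg q _
        · exact_mod_cast card_le_two

lemma weight_biUnion [DecidableEq α] (q : α → ℝ) {s : Finset ι} {t : ι → Finset α}
    (ht : (s : Set ι).PairwiseDisjoint t) :
    weight q (s.biUnion t) = ∑ i ∈ s, weight q (t i) :=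
  sum_biUnion ht

lemma weight_biUnion_le [DecidableEq α] [DecidableEq ι] (q : α → ℝ) (s : Finset ι)
    (t : ι → Finset α) : weight q (s.biUnion t) ≤ ∑ i ∈ s, weight q (t i) := by
  induction s using Finset.induction_on with
  | empty => simp [weight]
  | insert i s hi ih =>
    rw [biUnion_insert, sum_insert hi]
    calc weight q (t i ∪ s.biUnion t)
        ≤ weight q (t i ∪ s.biUnion t) + weight q (t i ∩ s.biUnion t) :=
          le_add_of_nonneg_right (weight_nonneg q _)
      _ = weight q (t i) + weight q (s.biUnion t) := sum_union_inter
      _ ≤ weight q (t i) + ∑ j ∈ s, weight q (t j) := by gcongr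

end ExpMech

lemma div_le_mul_mul_div_of_le_mul {n₁ n₂ d₁ d₂ c c' : ℝ} (hd₁ : 0 < d₁) (hd₂ : 0 < d₂)
    (hn₂ : 0 ≤ n₂) (hc : 0 ≤ c) (hn : n₁ ≤ c * n₂) (hd : d₂ ≤ c' * d₁) :
    n₁ / d₁ ≤ c * c' * (n₂ / d₂) := by
  rw [← mul_div_assoc, div_le_div_iff₀ hd₁ hd₂]
  calc n₁ * d₂ ≤ c * n₂ * (c' * d₁) := mul_le_mul hn hd hd₂.le (by positivity)
    _ = c * c' * n₂ * d₁ := by ring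

open ExpMech in
theorem stmt17_general {Hyp Z : Type*} [DecidableEq Hyp] [Fintype Z]
    (H1 H2 : Finset Hyp) (q1 q2 : Hyp → ℝ)
    (h1 h1' h2 h2' : Z → Hyp)
    (hH1 : H1 = Finset.univ.biUnion (fun z => {h1 z, h1' z}))
    (hH2 : H2 = Finset.univ.biUnion (fun z => {h2 z, h2' z}))
    (hdisj1 : ∀ z z' : Z, z ≠ z' →
      Disjoint ({h1 z, h1' z} : Finset Hyp) ({h1 z', h1' z'} : Finset Hyp))
    (hcross : ∀ z, ∀ f ∈ ({h1 z, h1' z} : Finset Hyp),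
      ∀ g ∈ ({h2 z, h2' z} : Finset Hyp), |q1 f - q2 g| ≤ 1) :
    ∀ z : Z,
      (∑ f ∈ ({h1 z, h1' z} : Finset Hyp), Real.exp (q1 f / 2)) /
          (∑ f ∈ H1, Real.exp (q1 f / 2))
        ≤ 4 * Real.exp 1 *
          ((∑ f ∈ ({h2 z, h2' z} : Finset Hyp), Real.exp (q2 f / 2)) /
            (∑ f ∈ H2, Real.exp (q2 f / 2))) := by
  classical
  intro z
  have hmem : ∀ (a b : Z → Hyp) (H : Finset Hyp), H = univ.biUnion (fun w ↦ {a w, b w}) →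
      a z ∈ H := fun a b H hH ↦ hH ▸ mem_biUnion.mpr ⟨z, mem_univ z, mem_insert_self _ _⟩
  have hH2_le : weight q2 H2 ≤ 2 * exp (1 / 2) * weight q1 H1 := by
    rw [hH1, weight_biUnion q1 fun a _ b _ hab ↦ hdisj1 a b hab, mul_sum, hH2]
    refine (weight_biUnion_le q2 _ _).trans (sum_le_sum fun w _ ↦ weight_pair_le ?_)
    exact fun g hg f hf ↦ abs_sub_comm (q1 f) (q2 g) ▸ hcross w f hf g hg
  have h4e : 4 * exp 1 = 2 * exp (1 / 2) * (2 * exp (1 / 2)) := by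
    rw [mul_mul_mul_comm, ← exp_add]; norm_num
  rw [h4e]
  exact div_le_mul_mul_div_of_le_mul (weight_pos q1 ⟨_, hmem h1 h1' H1 hH1⟩)
    (weight_pos q2 ⟨_, hmem h2 h2' H2 hH2⟩) (weight_nonneg q2 _) (by positivity)
    (weight_pair_le (hcross z)) hH2_le

/-- For neighboring databases in LabelBoostProcedure, the exponential-mechanism
weights of corresponding pairs of hypotheses are comparable:
`w_{1,z} ≤ 4e · w_{2,z}`. -/
theorem stmt17 {Hyp Z : Type*} [DecidableEq Hyp] [Fintype Z]
    (H1 H2 : Finset Hyp) (q1 q2 : Hyp → ℝ)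
    (h1 h1' h2 h2' : Z → Hyp)
    (hH1 : H1 = Finset.univ.biUnion (fun z => {h1 z, h1' z}))
    (hH2 : H2 = Finset.univ.biUnion (fun z => {h2 z, h2' z}))
    (hdisj1 : ∀ z z' : Z, z ≠ z' →
      Disjoint ({h1 z, h1' z} : Finset Hyp) ({h1 z', h1' z'} : Finset Hyp))
    (hdisj2 : ∀ z z' : Z, z ≠ z' →
      Disjoint ({h2 z, h2' z} : Finset Hyp) ({h2 z', h2' z'} : Finset Hyp))
    (hq1 : ∀ z, |q1 (h1 z) - q1 (h1' z)| ≤ 1)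
    (hq2 : ∀ z, |q2 (h2 z) - q2 (h2' z)| ≤ 1)
    (hcross : ∀ z, ∀ f ∈ ({h1 z, h1' z} : Finset Hyp),
      ∀ g ∈ ({h2 z, h2' z} : Finset Hyp), |q1 f - q2 g| ≤ 1) :
    ∀ z : Z,
      (∑ f ∈ ({h1 z, h1' z} : Finset Hyp), Real.exp (q1 f / 2)) /
          (∑ f ∈ H1, Real.exp (q1 f / 2))
        ≤ 4 * Real.exp 1 *
          ((∑ f ∈ ({h2 z, h2' z} : Finset Hyp), Real.exp (q2 f / 2)) /
            (∑ f ∈ H2, Real.exp (q2 f / 2))) :=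
  stmt17_general H1 H2 q1 q2 h1 h1' h2 h2' hH1 hH2 hdisj1 hcross
end
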